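/- arXiv:2602.11152 — 2 statements merged into one kernel-verified Lean document; each statement's English description precedes it below -/
import Mathlib

section
/- Let β ≥ 1 and let μ be a Borel probability measure on [0,1]³, with coordinates denoted (w, y, b). If ∫ σ_β(w − y) dμ ≥ 1/2 and ∫ σ_β(y − b) dμ ≥ 1/2, then ∫ b dμ ≤ β · (1 + exp(−β))/(1 − exp(−β)) · ∫ w dμ. -/
open MeasureTheory

noncomputable def sigma (β t : ℝ) : ℝ := 1 / (1 + Real.exp (-(β * t)))

/-!
Write `σ = sigma β = sigmoid (β · _)` with `β ≥ 0`. For `w, y ≥ 0` and `b ∈ [0, 1]` the pointwise bound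
`(σ 1 - 1/2) b + 2 σ (w - y) + σ (y - b) ≤ (β/2) w + 3/2` holds: `σ` is `β/4`-Lipschitz, so
`σ (w - y) ≤ 1 - σ y + (β/4) w`; `σ (y - b) + σ b ≤ 2 σ y` for `y ≥ 0`; and `σ` is concave on
`[0, ∞)`, so `σ b ≥ 1/2 + (σ 1 - 1/2) b`. Integrating against `μ`, the two hypotheses turn it into
`(σ 1 - 1/2) 𝔼[b] ≤ (β/2) 𝔼[w]`, and `σ 1 - 1/2 = (1 - e^{-β}) / (2 (1 + e^{-β}))`.
-/

open Real Set

namespace Real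

lemma sigmoid_mul_one_sub_sigmoid_le (x : ℝ) : sigmoid x * (1 - sigmoid x) ≤ 1 / 4 := by
  nlinarith [sq_nonneg (sigmoid x - 1 / 2)]

lemma sigmoid_sub_sigmoid_le {x y : ℝ} (hxy : x ≤ y) : sigmoid y - sigmoid x ≤ (y - x) / 4 := by
  have hmono : Monotone fun t => t / 4 - sigmoid t := by
    refine monotone_of_deriv_nonneg (by fun_prop) fun t => ?_
    rw [(((hasDerivAt_id' t).div_const 4).fun_sub (hasDerivAt_sigmoid t)).deriv]
    linarith [sigmoid_mul_one_sub_sigmoid_le t]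
  linarith [hmono hxy]

lemma concaveOn_sigmoid : ConcaveOn ℝ (Ici 0) sigmoid := by
  refine AntitoneOn.concaveOn_of_deriv (convex_Ici 0) continuous_sigmoid.continuousOn
    differentiable_sigmoid.differentiableOn ?_
  rw [interior_Ici, deriv_sigmoid]
  intro x hx y _ hxy
  -- `s ↦ s (1 - s)` decreases on `[1/2, 1]`, and `sigmoid ≥ 1/2` on `[0, ∞)`.
  have hhalf : 2⁻¹ ≤ sigmoid x := sigmoid_zero ▸ sigmoid_le (le_of_lt hx)
  have hmono := sigmoid_le hxy
  dsimp only
  nlinarith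

lemma secant_le_sigmoid_mul {β b : ℝ} (hβ : 0 ≤ β) (hb₀ : 0 ≤ b) (hb₁ : b ≤ 1) :
    2⁻¹ + (sigmoid β - 2⁻¹) * b ≤ sigmoid (β * b) := by
  have h := concaveOn_sigmoid.2 (mem_Ici.2 le_rfl) (mem_Ici.2 hβ) (sub_nonneg.2 hb₁) hb₀
    (sub_add_cancel 1 b)
  simp only [smul_eq_mul, mul_zero, zero_add, sigmoid_zero, mul_comm b β] at h
  linarith

lemma sigmoid_sub_add_sigmoid_le {x : ℝ} (hx : 0 ≤ x) (y : ℝ) :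
    sigmoid (x - y) + sigmoid y ≤ 2 * sigmoid x := by
  have hP : exp (-x) ≤ 1 := exp_le_one_iff.2 (neg_nonpos.2 hx)
  have hQ := exp_pos (-y)
  have hPQ : exp (-(x - y)) = exp (-x) / exp (-y) := by rw [← exp_sub]; ring_nf
  simp only [sigmoid_def, hPQ]
  rw [← sub_nonneg]
  have key : 2 * (1 + exp (-x))⁻¹ - ((1 + exp (-x) / exp (-y))⁻¹ + (1 + exp (-y))⁻¹) =
      (1 - exp (-x)) * (exp (-x) + exp (-y) ^ 2) /
        ((1 + exp (-x)) * (1 + exp (-y)) * (exp (-y) + exp (-x))) := by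
    field_simp
    ring
  rw [key]
  have := exp_pos (-x)
  exact div_nonneg (mul_nonneg (by linarith) (by positivity)) (by positivity)

end Real

lemma sigma_eq_sigmoid (β t : ℝ) : sigma β t = sigmoid (β * t) := one_div _

lemma sigma_one_sub_half (β : ℝ) : sigma β 1 - 1 / 2 = (1 - exp (-β)) / (2 * (1 + exp (-β))) := by
  rw [sigma, mul_one]
  field_simp
  ring

lemma copeland_pointwise_bound {β w y b : ℝ} (hβ : 0 ≤ β) (hw : 0 ≤ w) (hy : 0 ≤ y)
    (hb₀ : 0 ≤ b) (hb₁ : b ≤ 1) :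
    (sigma β 1 - 1 / 2) * b + 2 * sigma β (w - y) + sigma β (y - b) ≤ β / 2 * w + 3 / 2 := by
  simp only [sigma_eq_sigmoid, mul_one, mul_sub]
  have hlip := sigmoid_sub_sigmoid_le (by nlinarith : -(β * y) ≤ β * w - β * y)
  have hneg := sigmoid_neg (β * y)
  have htri := sigmoid_sub_add_sigmoid_le (mul_nonneg hβ hy) (β * b)
  have hsec := secant_le_sigmoid_mul hβ hb₀ hb₁
  linarith

lemma sigma_mem_Icc (β t : ℝ) : sigma β t ∈ Icc (0 : ℝ) 1 := by
  rw [sigma_eq_sigmoid]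
  exact ⟨sigmoid_nonneg _, sigmoid_le_one _⟩

lemma integrable_sigma_comp {α : Type*} [MeasurableSpace α] {μ : Measure α} [IsFiniteMeasure μ]
    (β : ℝ) {f : α → ℝ} (hf : Measurable f) : Integrable (fun p => sigma β (f p)) μ :=
  .of_mem_Icc 0 1 (by simp_rw [sigma_eq_sigmoid]; fun_prop)
    (ae_of_all _ fun p => sigma_mem_Icc β (f p))

theorem copeland_key_case (β : ℝ) (hβ : 1 ≤ β)
    (μ : Measure (ℝ × ℝ × ℝ)) [IsProbabilityMeasure μ]
    (hsupp : ∀ᵐ p ∂μ, p.1 ∈ Set.Icc (0:ℝ) 1 ∧ p.2.1 ∈ Set.Icc (0:ℝ) 1 ∧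
      p.2.2 ∈ Set.Icc (0:ℝ) 1)
    (h1 : (∫ p, sigma β (p.1 - p.2.1) ∂μ) ≥ 1/2)
    (h2 : (∫ p, sigma β (p.2.1 - p.2.2) ∂μ) ≥ 1/2) :
    (∫ p, p.2.2 ∂μ) ≤ β * ((1 + Real.exp (-β)) / (1 - Real.exp (-β))) * (∫ p, p.1 ∂μ) := by
  have hβ₀ : 0 ≤ β := by linarith
  have hw : Integrable (fun p : ℝ × ℝ × ℝ => p.1) μ :=
    .of_mem_Icc 0 1 (by fun_prop) (hsupp.mono fun _ hp => hp.1)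
  have hb : Integrable (fun p : ℝ × ℝ × ℝ => p.2.2) μ :=
    .of_mem_Icc 0 1 (by fun_prop) (hsupp.mono fun _ hp => hp.2.2)
  have hσ₁ := integrable_sigma_comp (μ := μ) β (f := fun p => p.1 - p.2.1) (by fun_prop)
  have hσ₂ := integrable_sigma_comp (μ := μ) β (f := fun p => p.2.1 - p.2.2) (by fun_prop)
  have hbound : ∀ᵐ p ∂μ, (sigma β 1 - 1 / 2) * p.2.2 + 2 * sigma β (p.1 - p.2.1)
      + sigma β (p.2.1 - p.2.2) ≤ β / 2 * p.1 + 3 / 2 := by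
    filter_upwards [hsupp] with p ⟨hw, hy, hb⟩
    exact copeland_pointwise_bound hβ₀ hw.1 hy.1 hb.1 hb.2
  have hintegrated := integral_mono_ae (((hb.const_mul _).fun_add (hσ₁.const_mul 2)).fun_add hσ₂)
    ((hw.const_mul _).fun_add (integrable_const _)) hbound
  rw [integral_add ((hb.const_mul _).fun_add (hσ₁.const_mul 2)) hσ₂,
    integral_add (hb.const_mul _) (hσ₁.const_mul 2),
    integral_add (hw.const_mul _) (integrable_const _), integral_const_mul, integral_const_mul,
    integral_const_mul, integral_const, probReal_univ, one_smul] at hintegrated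
  have hcompare : (sigma β 1 - 1 / 2) * ∫ p, p.2.2 ∂μ ≤ β / 2 * ∫ p, p.1 ∂μ := by linarith
  have hE : exp (-β) < 1 := exp_lt_one_iff.2 (by linarith)
  rw [sigma_one_sub_half, div_mul_eq_mul_div, div_le_iff₀ (by positivity)] at hcompare
  rw [mul_div_assoc', div_mul_eq_mul_div, le_div_iff₀ (by linarith)]
  linarith
end

section
/- Let β > 0, let m ≥ 1 be an integer, let μ be a Borel probability measure on the cube [0,1]^m (a utility vector u = (u_1, …, u_m)), and let B ∈ {1, …, m}. Then ∑_{j=1}^m ( ∫ exp(β·u_j)/(∑_{k=1}^m exp(β·u_k)) dμ ) · ( ∫ u_j dμ ) ≥ (1/(m·exp(β))) · ∫ u_B dμ. -/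
/-!
Since every utility lies in `[0, 1]` and `β > 0`, a voter ranks any fixed candidate first with
probability at least `e^0 / (m e^β)`. Keeping only the term of the welfare maximiser `B` in the
nonnegative sum on the left then gives the bound.
-/

open MeasureTheory

section

variable {ι : Type*} [Fintype ι]

noncomputable def firstChoiceProb (β : ℝ) (u : ι → ℝ) (j : ι) : ℝ :=
  Real.exp (β * u j) / ∑ k, Real.exp (β * u k)

lemma sum_exp_mul_pos (β : ℝ) (u : ι → ℝ) (j : ι) : 0 < ∑ k, Real.exp (β * u k) :=
  Finset.sum_pos (fun _ _ => Real.exp_pos _) ⟨j, Finset.mem_univ j⟩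

lemma firstChoiceProb_nonneg (β : ℝ) (u : ι → ℝ) (j : ι) : 0 ≤ firstChoiceProb β u j :=
  div_nonneg (Real.exp_pos _).le (sum_exp_mul_pos β u j).le

lemma firstChoiceProb_le_one (β : ℝ) (u : ι → ℝ) (j : ι) : firstChoiceProb β u j ≤ 1 :=
  (div_le_one (sum_exp_mul_pos β u j)).2 <|
    Finset.single_le_sum (f := fun k => Real.exp (β * u k)) (fun _ _ => (Real.exp_pos _).le)
      (Finset.mem_univ j)

lemma measurable_firstChoiceProb (β : ℝ) (j : ι) :
    Measurable fun u : ι → ℝ => firstChoiceProb β u j := by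
  unfold firstChoiceProb
  fun_prop

lemma integrable_firstChoiceProb (μ : Measure (ι → ℝ)) [IsFiniteMeasure μ] (β : ℝ) (j : ι) :
    Integrable (fun u => firstChoiceProb β u j) μ := by
  refine (integrable_const (1 : ℝ)).mono' (measurable_firstChoiceProb β j).aestronglyMeasurable
    (ae_of_all _ fun u => ?_)
  rw [Real.norm_of_nonneg (firstChoiceProb_nonneg β u j)]
  exact firstChoiceProb_le_one β u j

lemma inv_card_mul_exp_le_firstChoiceProb {β : ℝ} (hβ : 0 ≤ β) {u : ι → ℝ}
    (hu : ∀ k, u k ∈ Set.Icc (0 : ℝ) 1) (j : ι) :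
    (Fintype.card ι * Real.exp β)⁻¹ ≤ firstChoiceProb β u j := by
  have hnum : 1 ≤ Real.exp (β * u j) := Real.one_le_exp (mul_nonneg hβ (hu j).1)
  have hden : ∑ k, Real.exp (β * u k) ≤ Fintype.card ι * Real.exp β :=
    calc ∑ k, Real.exp (β * u k) ≤ ∑ _k : ι, Real.exp β :=
          Finset.sum_le_sum fun k _ =>
            Real.exp_le_exp.2 (mul_le_of_le_one_right hβ (hu k).2)
      _ = Fintype.card ι * Real.exp β := by simp
  rw [← one_div]
  exact div_le_div₀ (Real.exp_pos _).le hnum (sum_exp_mul_pos β u j) hden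

lemma inv_card_mul_exp_le_integral_firstChoiceProb
    (μ : Measure (ι → ℝ)) [IsProbabilityMeasure μ] {β : ℝ} (hβ : 0 ≤ β)
    (hsupp : ∀ᵐ u ∂μ, ∀ k, u k ∈ Set.Icc (0 : ℝ) 1) (j : ι) :
    (Fintype.card ι * Real.exp β)⁻¹ ≤ ∫ u, firstChoiceProb β u j ∂μ := by
  simpa using integral_mono_ae (integrable_const _) (integrable_firstChoiceProb μ β j)
    (hsupp.mono fun u hu => inv_card_mul_exp_le_firstChoiceProb hβ hu j)

end

theorem random_dictator_upper_bound_general (β : ℝ) (hβ : 0 < β) (m : ℕ)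
    (μ : Measure (Fin m → ℝ)) [IsProbabilityMeasure μ]
    (hsupp : ∀ᵐ u ∂μ, ∀ j, u j ∈ Set.Icc (0:ℝ) 1)
    (B : Fin m) :
    ∑ j, (∫ u, Real.exp (β * u j) / (∑ k, Real.exp (β * u k)) ∂μ) * (∫ u, u j ∂μ)
      ≥ (1 / ((m : ℝ) * Real.exp β)) * (∫ u, u B ∂μ) := by
  have hwelfare_nonneg : ∀ j : Fin m, 0 ≤ ∫ u, u j ∂μ := fun j =>
    integral_nonneg_of_ae (hsupp.mono fun u hu => (hu j).1)
  have hfirst_B : 1 / ((m : ℝ) * Real.exp β) ≤ ∫ u, firstChoiceProb β u B ∂μ := by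
    simpa using inv_card_mul_exp_le_integral_firstChoiceProb μ hβ.le hsupp B
  calc (1 / ((m : ℝ) * Real.exp β)) * (∫ u, u B ∂μ)
      ≤ (∫ u, firstChoiceProb β u B ∂μ) * (∫ u, u B ∂μ) :=
        mul_le_mul_of_nonneg_right hfirst_B (hwelfare_nonneg B)
    _ ≤ ∑ j, (∫ u, firstChoiceProb β u j ∂μ) * (∫ u, u j ∂μ) :=
        Finset.single_le_sum
          (fun j _ => mul_nonneg (integral_nonneg fun u => firstChoiceProb_nonneg β u j)
            (hwelfare_nonneg j)) (Finset.mem_univ B)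

theorem random_dictator_upper_bound (β : ℝ) (hβ : 0 < β) (m : ℕ) (hm : 1 ≤ m)
    (μ : Measure (Fin m → ℝ)) [IsProbabilityMeasure μ]
    (hsupp : ∀ᵐ u ∂μ, ∀ j, u j ∈ Set.Icc (0:ℝ) 1)
    (B : Fin m) :
    ∑ j, (∫ u, Real.exp (β * u j) / (∑ k, Real.exp (β * u k)) ∂μ) * (∫ u, u j ∂μ)
      ≥ (1 / ((m : ℝ) * Real.exp β)) * (∫ u, u B ∂μ) :=
  random_dictator_upper_bound_general β hβ m μ hsupp B
end
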